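/- arXiv:0907.2040 — 5 statements merged into one kernel-verified Lean document; each statement's English description precedes it below -/
import Mathlib

section
/- For smooth real functions f and g, the derivative of the partial sum Σ_{m=0}^{n} K^m[f](t) · K^m[g](t) equals γ_n · ( K^{n+1}[f](t) · K^n[g](t) + K^n[f](t) · K^{n+1}[g](t) ). -/
/-- The chromatic derivatives associated with recursion coefficients `γ`:
`K^{-1} = 0`, `K^0 = id` (with `γ_{-1} = 1`), and
`K^{n+1}[f] = (1/γ_n)(K^n[f])' + (γ_{n-1}/γ_n) K^{n-1}[f]`. -/
noncomputable def chromDeriv (γ : ℕ → ℝ) : ℕ → (ℝ → ℝ) → (ℝ → ℝ)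
  | 0, f => f
  | 1, f => fun t => (1 / γ 0) * deriv f t
  | (n + 2), f => fun t =>
      (1 / γ (n + 1)) * deriv (chromDeriv γ (n + 1) f) t +
        (γ n / γ (n + 1)) * chromDeriv γ n f t

lemma deriv_contDiff {f : ℝ → ℝ} (hf : ContDiff ℝ (⊤ : ℕ∞) f) : ContDiff ℝ (⊤ : ℕ∞) (deriv f) :=
  (contDiff_succ_iff_deriv.mp (show ContDiff ℝ (((⊤ : ℕ∞) : WithTop ℕ∞) + 1) f from hf)).2.2

lemma chrom_smooth (γ : ℕ → ℝ) (f : ℝ → ℝ) (hf : ContDiff ℝ (⊤ : ℕ∞) f) :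
    ∀ n, ContDiff ℝ (⊤ : ℕ∞) (chromDeriv γ n f) := by
  have key : ∀ n, ContDiff ℝ (⊤ : ℕ∞) (chromDeriv γ n f) ∧
      ContDiff ℝ (⊤ : ℕ∞) (chromDeriv γ (n + 1) f) := by
    intro n
    induction n with
    | zero =>
      refine ⟨hf, ?_⟩
      show ContDiff ℝ (⊤ : ℕ∞) (fun t => (1 / γ 0) * deriv f t)
      exact contDiff_const.mul (deriv_contDiff hf)
    | succ n ih =>
      refine ⟨ih.2, ?_⟩
      show ContDiff ℝ (⊤ : ℕ∞) (fun t =>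
        (1 / γ (n + 1)) * deriv (chromDeriv γ (n + 1) f) t +
          (γ n / γ (n + 1)) * chromDeriv γ n f t)
      exact (contDiff_const.mul (deriv_contDiff ih.2)).add
        (contDiff_const.mul ih.1)
  exact fun n => (key n).1

lemma chrom_diff (γ : ℕ → ℝ) (f : ℝ → ℝ) (hf : ContDiff ℝ (⊤ : ℕ∞) f) (n : ℕ) :
    Differentiable ℝ (chromDeriv γ n f) :=
  (chrom_smooth γ f hf n).differentiable (by simp)

lemma deriv_chrom_zero (γ : ℕ → ℝ) (hγ : ∀ n, 0 < γ n) (f : ℝ → ℝ) (t : ℝ) :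
    deriv f t = γ 0 * chromDeriv γ 1 f t := by
  have h0 : γ 0 ≠ 0 := (hγ 0).ne'
  simp only [chromDeriv]
  field_simp

lemma deriv_chrom_succ (γ : ℕ → ℝ) (hγ : ∀ n, 0 < γ n) (f : ℝ → ℝ) (n : ℕ) (t : ℝ) :
    deriv (chromDeriv γ (n + 1) f) t =
      γ (n + 1) * chromDeriv γ (n + 2) f t - γ n * chromDeriv γ n f t := by
  have h0 : γ (n + 1) ≠ 0 := (hγ (n + 1)).ne'
  show _ = γ (n + 1) * ((1 / γ (n + 1)) * deriv (chromDeriv γ (n + 1) f) t +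
        (γ n / γ (n + 1)) * chromDeriv γ n f t) - γ n * chromDeriv γ n f t
  field_simp
  ring

/-- For smooth `f, g`, the derivative of the partial sum
`Σ_{m=0}^{n} K^m[f](t) K^m[g](t)` equals
`γ_n (K^{n+1}[f](t) K^n[g](t) + K^n[f](t) K^{n+1}[g](t))`. -/
theorem chromatic_christoffel_darboux
    (γ : ℕ → ℝ) (hγ : ∀ n, 0 < γ n)
    (f g : ℝ → ℝ) (hf : ContDiff ℝ (⊤ : ℕ∞) f) (hg : ContDiff ℝ (⊤ : ℕ∞) g) :
    ∀ (n : ℕ) (t : ℝ),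
      deriv (fun s => ∑ m ∈ Finset.range (n + 1),
          chromDeriv γ m f s * chromDeriv γ m g s) t =
        γ n * (chromDeriv γ (n + 1) f t * chromDeriv γ n g t +
          chromDeriv γ n f t * chromDeriv γ (n + 1) g t) := by
  intro n
  induction n with
  | zero =>
    intro t
    have : (fun s => ∑ m ∈ Finset.range 1,
        chromDeriv γ m f s * chromDeriv γ m g s) = fun s => f s * g s := by
      funext s; simp [chromDeriv]
    rw [this, deriv_fun_mul (hf.differentiable (by simp) t) (hg.differentiable (by simp) t)]
    show deriv f t * g t + f t * deriv g t = _
    rw [deriv_chrom_zero γ hγ f t, deriv_chrom_zero γ hγ g t]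
    show _ = γ 0 * (chromDeriv γ 1 f t * g t + f t * chromDeriv γ 1 g t)
    ring
  | succ n ih =>
    intro t
    have hsum : (fun s => ∑ m ∈ Finset.range (n + 2),
        chromDeriv γ m f s * chromDeriv γ m g s) =
        (fun s => (∑ m ∈ Finset.range (n + 1),
          chromDeriv γ m f s * chromDeriv γ m g s) +
          chromDeriv γ (n + 1) f s * chromDeriv γ (n + 1) g s) := by
      funext s; rw [Finset.sum_range_succ]
    have hd1 : DifferentiableAt ℝ (fun s => ∑ m ∈ Finset.range (n + 1),
        chromDeriv γ m f s * chromDeriv γ m g s) t := by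
      apply DifferentiableAt.fun_sum
      intro m _
      exact ((chrom_diff γ f hf m) t).mul ((chrom_diff γ g hg m) t)
    have hd2 : DifferentiableAt ℝ
        (fun s => chromDeriv γ (n + 1) f s * chromDeriv γ (n + 1) g s) t :=
      ((chrom_diff γ f hf (n + 1)) t).mul ((chrom_diff γ g hg (n + 1)) t)
    rw [hsum, deriv_fun_add hd1 hd2, ih t,
      deriv_fun_mul ((chrom_diff γ f hf (n + 1)) t) ((chrom_diff γ g hg (n + 1)) t),
      deriv_chrom_succ γ hγ f n t, deriv_chrom_succ γ hγ g n t]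
    ring
end

section
/- For the chromatic derivatives K^n associated with the Legendre polynomials, K^n[sinc](t) = (−1)^n √(2n+1) · j_n(πt), where j_n is the spherical Bessel function of the first kind of order n and sinc t = sin(πt)/(πt). -/
open Real

/-- Recursion coefficients of the rescaled Legendre polynomials
`P^L_n(ω) = √(2n+1) L_n(ω/π)`. -/
noncomputable def legendreGamma (n : ℕ) : ℝ :=
  Real.pi * (n + 1) / Real.sqrt (4 * ((n : ℝ) + 1) ^ 2 - 1)

/-- The cardinal sine `sinc t = sin(πt)/(πt)`. -/
noncomputable def sinc (t : ℝ) : ℝ :=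
  if t = 0 then 1 else Real.sin (Real.pi * t) / (Real.pi * t)

/-- The spherical Bessel functions of the first kind, via
`j_0(x) = sin x / x`, `j_1(x) = sin x / x² − cos x / x`, and the recurrence
`j_{n+2}(x) = ((2n+3)/x) j_{n+1}(x) − j_n(x)`. -/
noncomputable def sphBessel : ℕ → ℝ → ℝ
  | 0, x => if x = 0 then 1 else Real.sin x / x
  | 1, x => if x = 0 then 0 else Real.sin x / x ^ 2 - Real.cos x / x
  | (n + 2), x => if x = 0 then 0 else
      (2 * (n : ℝ) + 3) / x * sphBessel (n + 1) x - sphBessel n x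

/-!
Write `j_n(x) = x ^ n F_n(x²)` with the entire series `F_n = sphBesselSeries n`,
`F_n(y) = ∑ₖ (-1)ᵏ yᵏ / (2ᵏ k! (2n+2k+1)‼)`. Comparing coefficients gives
`F_n' = -F_{n+1} / 2` and `(2n+3) F_{n+1}(y) = F_n(y) + y F_{n+2}(y)`, and `x F_0(x²) = sin x`
is the sine series. From these, `x ^ n F_n(x²)` satisfies the closed forms and the recurrence
defining `sphBessel`, and `j_0' = -j_1`, `(2n+3) j_{n+1}' = (n+1) j_n - (n+2) j_{n+2}` hold
everywhere, including at `x = 0`. So `t ↦ (-1)ⁿ √(2n+1) j_n(πt)` starts at `sinc = j_0(π ·)` and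
satisfies `(Kⁿ⁺¹ f)' = γ_{n+1} Kⁿ⁺² f - γ_n Kⁿ f`, the recurrence that determines the chromatic
derivatives.
-/

open scoped Nat

section FactoriallyBoundedSeries

variable {c : ℕ → ℝ}

theorem summable_mul_pow_of_abs_le_inv_factorial (hc : ∀ k, |c k| ≤ 1 / k !) (y : ℝ) :
    Summable fun k => c k * y ^ k := by
  refine .of_norm_bounded (Real.summable_pow_div_factorial |y|) fun k => ?_
  rw [norm_mul, norm_pow, Real.norm_eq_abs, Real.norm_eq_abs, div_eq_inv_mul, ← one_div]
  exact mul_le_mul_of_nonneg_right (hc k) (by positivity)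

theorem hasDerivAt_tsum_mul_pow_of_abs_le_inv_factorial (hc : ∀ k, |c k| ≤ 1 / k !) (y : ℝ) :
    HasDerivAt (fun y => ∑' k, c k * y ^ k) (∑' k, (k + 1) * c (k + 1) * y ^ k) y := by
  set R := |y| + 1
  have hR : 1 ≤ R := le_add_of_nonneg_left (abs_nonneg y)
  have hbound : ∀ k, ∀ z ∈ Metric.ball (0 : ℝ) R, ‖c k * (k * z ^ (k - 1))‖ ≤ (2 * R) ^ k / k ! := by
    intro k z hz
    rw [mem_ball_zero_iff, Real.norm_eq_abs] at hz
    have hk : (k : ℝ) ≤ 2 ^ k := by exact_mod_cast k.lt_two_pow_self.le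
    have hzk : |z| ^ (k - 1) ≤ R ^ k :=
      (pow_le_pow_left₀ (abs_nonneg z) hz.le _).trans (pow_le_pow_right₀ hR (Nat.sub_le k 1))
    rw [norm_mul, norm_mul, norm_pow, Real.norm_eq_abs, Real.norm_eq_abs, Nat.abs_cast,
      mul_pow, div_eq_inv_mul, ← one_div]
    exact mul_le_mul (hc k) (mul_le_mul hk hzk (by positivity) (by positivity))
      (by positivity) (by positivity)
  have hy : y ∈ Metric.ball (0 : ℝ) R := by simp [R]
  have hderiv := hasDerivAt_tsum_of_isPreconnected (Real.summable_pow_div_factorial (2 * R))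
    Metric.isOpen_ball (convex_ball 0 R).isPreconnected
    (fun k z _ => (hasDerivAt_pow k z).const_mul (c k)) hbound hy
    (summable_mul_pow_of_abs_le_inv_factorial hc y) hy
  have hsummable : Summable fun k => c k * (k * y ^ (k - 1)) :=
    .of_norm_bounded (Real.summable_pow_div_factorial (2 * R)) fun k => hbound k y hy
  rw [hsummable.tsum_eq_zero_add] at hderiv
  refine hderiv.congr_deriv ?_
  simp only [CharP.cast_eq_zero, zero_mul, mul_zero, zero_add, Nat.add_sub_cancel, Nat.cast_succ]
  exact tsum_congr fun k => by ring

end FactoriallyBoundedSeries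

noncomputable def sphBesselCoeff (n k : ℕ) : ℝ :=
  (-1) ^ k / (2 ^ k * k ! * (2 * n + 2 * k + 1)‼)

theorem abs_sphBesselCoeff_le (n k : ℕ) : |sphBesselCoeff n k| ≤ 1 / k ! := by
  rw [sphBesselCoeff, abs_div, abs_pow, abs_neg, abs_one, one_pow,
    abs_of_pos (by positivity)]
  gcongr
  have hdf : (1 : ℝ) ≤ (2 * n + 2 * k + 1)‼ := by exact_mod_cast Nat.doubleFactorial_pos _
  calc (k ! : ℝ) = 1 * k ! * 1 := by ring
    _ ≤ 2 ^ k * k ! * (2 * n + 2 * k + 1)‼ := by gcongr; exact one_le_pow₀ one_le_two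

theorem sphBesselCoeff_zero_left (k : ℕ) :
    sphBesselCoeff 0 k = (-1) ^ k / (2 * k + 1)! := by
  rw [sphBesselCoeff, mul_zero, zero_add, Nat.factorial_eq_mul_doubleFactorial,
    Nat.doubleFactorial_two_mul]
  push_cast
  ring

theorem succ_mul_sphBesselCoeff_succ (n k : ℕ) :
    (k + 1) * sphBesselCoeff n (k + 1) = -sphBesselCoeff (n + 1) k / 2 := by
  rw [sphBesselCoeff, sphBesselCoeff, show 2 * (n + 1) + 2 * k + 1 = 2 * n + 2 * (k + 1) + 1 by omega,
    Nat.factorial_succ]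
  push_cast
  field_simp
  ring

theorem sphBesselCoeff_recurrence_zero (n : ℕ) :
    (2 * n + 3) * sphBesselCoeff (n + 1) 0 = sphBesselCoeff n 0 := by
  rw [sphBesselCoeff, sphBesselCoeff, show 2 * (n + 1) + 2 * 0 + 1 = (2 * n + 2 * 0 + 1) + 2 by omega,
    Nat.doubleFactorial_add_two]
  push_cast
  field_simp
  ring

theorem sphBesselCoeff_recurrence_succ (n k : ℕ) :
    (2 * n + 3) * sphBesselCoeff (n + 1) (k + 1) =
      sphBesselCoeff n (k + 1) + sphBesselCoeff (n + 2) k := by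
  rw [sphBesselCoeff, sphBesselCoeff, sphBesselCoeff,
    show 2 * (n + 1) + 2 * (k + 1) + 1 = (2 * n + 2 * (k + 1) + 1) + 2 by omega,
    show 2 * (n + 2) + 2 * k + 1 = (2 * n + 2 * (k + 1) + 1) + 2 by omega,
    Nat.doubleFactorial_add_two, Nat.factorial_succ]
  push_cast
  field_simp
  ring

noncomputable def sphBesselSeries (n : ℕ) (y : ℝ) : ℝ :=
  ∑' k, sphBesselCoeff n k * y ^ k

theorem hasSum_sphBesselSeries (n : ℕ) (y : ℝ) :
    HasSum (fun k => sphBesselCoeff n k * y ^ k) (sphBesselSeries n y) :=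
  (summable_mul_pow_of_abs_le_inv_factorial (abs_sphBesselCoeff_le n) y).hasSum

theorem sphBesselSeries_zero_right (n : ℕ) : sphBesselSeries n 0 = sphBesselCoeff n 0 := by
  rw [sphBesselSeries, tsum_eq_single 0 fun k hk => by simp [hk]]
  simp

theorem hasDerivAt_sphBesselSeries (n : ℕ) (y : ℝ) :
    HasDerivAt (sphBesselSeries n) (-sphBesselSeries (n + 1) y / 2) y := by
  have hsum : HasSum (fun k => (k + 1) * sphBesselCoeff n (k + 1) * y ^ k)
      (-sphBesselSeries (n + 1) y / 2) := by
    simpa only [succ_mul_sphBesselCoeff_succ, neg_div, neg_mul, div_mul_eq_mul_div]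
      using ((hasSum_sphBesselSeries (n + 1) y).div_const 2).neg
  rw [← hsum.tsum_eq]
  exact hasDerivAt_tsum_mul_pow_of_abs_le_inv_factorial (abs_sphBesselCoeff_le n) y

theorem sphBesselSeries_recurrence (n : ℕ) (y : ℝ) :
    (2 * n + 3) * sphBesselSeries (n + 1) y =
      sphBesselSeries n y + y * sphBesselSeries (n + 2) y := by
  have hlhs := (hasSum_sphBesselSeries (n + 1) y).mul_left (2 * n + 3 : ℝ)
  have hrhs := hasSum_sphBesselSeries n y
  rw [← hasSum_nat_add_iff' 1] at hlhs hrhs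
  have hrhs' := hrhs.add ((hasSum_sphBesselSeries (n + 2) y).mul_left y)
  have hterms : (fun k => (2 * n + 3 : ℝ) * (sphBesselCoeff (n + 1) (k + 1) * y ^ (k + 1))) =
      fun k => sphBesselCoeff n (k + 1) * y ^ (k + 1) + y * (sphBesselCoeff (n + 2) k * y ^ k) := by
    ext k
    rw [← mul_assoc, sphBesselCoeff_recurrence_succ]
    ring
  have := hlhs.unique (hterms ▸ hrhs')
  simp only [Finset.range_one, Finset.sum_singleton, pow_zero, mul_one] at this
  linear_combination this + sphBesselCoeff_recurrence_zero n

theorem mul_sphBesselSeries_zero_sq (x : ℝ) : x * sphBesselSeries 0 (x ^ 2) = Real.sin x := by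
  have hterms : (fun k : ℕ => x * (sphBesselCoeff 0 k * (x ^ 2) ^ k)) =
      fun k => (-1) ^ k * x ^ (2 * k + 1) / (2 * k + 1)! := by
    ext k
    rw [sphBesselCoeff_zero_left]
    ring
  exact ((hasSum_sphBesselSeries 0 (x ^ 2)).mul_left x).unique (hterms ▸ Real.hasSum_sin x)

theorem hasDerivAt_pow_mul_sphBesselSeries_sq (n : ℕ) (x : ℝ) :
    HasDerivAt (fun x => x ^ n * sphBesselSeries n (x ^ 2))
      (n * x ^ (n - 1) * sphBesselSeries n (x ^ 2) - x ^ (n + 1) * sphBesselSeries (n + 1) (x ^ 2))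
      x := by
  have hF := (hasDerivAt_sphBesselSeries n (x ^ 2)).comp x (hasDerivAt_pow 2 x)
  refine ((hasDerivAt_pow n x).mul hF).congr_deriv ?_
  simp only [Function.comp_apply, Nat.cast_ofNat, Nat.add_one_sub_one, pow_one]
  ring

/-- Differentiating `x * F₀(x²) = sin x` gives `F₀(x²) - x² F₁(x²) = cos x`. -/
theorem pow_three_mul_sphBesselSeries_one_sq (x : ℝ) :
    x ^ 3 * sphBesselSeries 1 (x ^ 2) = Real.sin x - x * Real.cos x := by
  have hderiv : HasDerivAt Real.sin
      (1 * sphBesselSeries 0 (x ^ 2) + x * (-sphBesselSeries 1 (x ^ 2) / 2 * (2 * x))) x := by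
    rw [← funext mul_sphBesselSeries_zero_sq]
    refine ((hasDerivAt_id' x).mul
      ((hasDerivAt_sphBesselSeries 0 (x ^ 2)).comp x (hasDerivAt_pow 2 x))).congr_deriv ?_
    simp
  have hcos := (Real.hasDerivAt_sin x).unique hderiv
  linear_combination x * hcos + mul_sphBesselSeries_zero_sq x

theorem sphBessel_eq_pow_mul_sphBesselSeries_sq (n : ℕ) (x : ℝ) :
    sphBessel n x = x ^ n * sphBesselSeries n (x ^ 2) := by
  induction n using Nat.twoStepInduction with
  | zero =>
    rcases eq_or_ne x 0 with rfl | hx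
    · simp [sphBessel, sphBesselSeries_zero_right, sphBesselCoeff]
    · rw [sphBessel, if_neg hx, ← mul_sphBesselSeries_zero_sq]
      field_simp
  | one =>
    rcases eq_or_ne x 0 with rfl | hx
    · simp [sphBessel]
    · rw [sphBessel, if_neg hx]
      field_simp
      linear_combination -pow_three_mul_sphBesselSeries_one_sq x
  | more n ih₀ ih₁ =>
    rcases eq_or_ne x 0 with rfl | hx
    · simp [sphBessel]
    · rw [sphBessel, if_neg hx, ih₀, ih₁]
      field_simp
      linear_combination x ^ (n + 1) * sphBesselSeries_recurrence n (x ^ 2)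

theorem hasDerivAt_sphBessel_zero (x : ℝ) : HasDerivAt (sphBessel 0) (-sphBessel 1 x) x := by
  rw [funext (sphBessel_eq_pow_mul_sphBesselSeries_sq 0), sphBessel_eq_pow_mul_sphBesselSeries_sq]
  refine (hasDerivAt_pow_mul_sphBesselSeries_sq 0 x).congr_deriv ?_
  simp

theorem hasDerivAt_sphBessel_succ (n : ℕ) (x : ℝ) :
    HasDerivAt (sphBessel (n + 1))
      (((n + 1) * sphBessel n x - (n + 2) * sphBessel (n + 2) x) / (2 * n + 3)) x := by
  rw [funext (sphBessel_eq_pow_mul_sphBesselSeries_sq (n + 1)),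
    sphBessel_eq_pow_mul_sphBesselSeries_sq, sphBessel_eq_pow_mul_sphBesselSeries_sq]
  refine (hasDerivAt_pow_mul_sphBesselSeries_sq (n + 1) x).congr_deriv ?_
  field_simp
  push_cast
  linear_combination (n + 1) * x ^ n * sphBesselSeries_recurrence n (x ^ 2)

theorem chromDeriv_eq_of_deriv {γ : ℕ → ℝ} (hγ : ∀ n, γ n ≠ 0) {g : ℕ → ℝ → ℝ}
    (hderiv_zero : ∀ t, deriv (g 0) t = γ 0 * g 1 t)
    (hderiv_succ : ∀ n t, deriv (g (n + 1)) t = γ (n + 1) * g (n + 2) t - γ n * g n t)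
    (n : ℕ) : chromDeriv γ n (g 0) = g n := by
  induction n using Nat.twoStepInduction with
  | zero => rfl
  | one =>
    ext t
    simp only [chromDeriv, hderiv_zero]
    field_simp [hγ 0]
  | more n ih₀ ih₁ =>
    ext t
    simp only [chromDeriv, ih₀, ih₁, hderiv_succ]
    field_simp [hγ (n + 1)]
    ring

theorem legendreGamma_eq (n : ℕ) :
    legendreGamma n = π * (n + 1) / (√(2 * n + 1) * √(2 * n + 3)) := by
  rw [legendreGamma, ← Real.sqrt_mul (by positivity)]
  congr 2
  ring

theorem legendreGamma_ne_zero (n : ℕ) : legendreGamma n ≠ 0 := by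
  rw [legendreGamma_eq]
  positivity

noncomputable def scaledSphBessel (n : ℕ) (t : ℝ) : ℝ :=
  (-1) ^ n * √(2 * n + 1) * sphBessel n (π * t)

theorem scaledSphBessel_zero : scaledSphBessel 0 = _root_.sinc := by
  ext t
  simp [scaledSphBessel, _root_.sinc, sphBessel, pi_ne_zero]

theorem deriv_scaledSphBessel (n : ℕ) (t : ℝ) :
    deriv (scaledSphBessel n) t = (-1) ^ n * √(2 * n + 1) * (π * deriv (sphBessel n) (π * t)) := by
  unfold scaledSphBessel
  rw [deriv_const_mul_field']
  dsimp only
  rw [deriv_comp_mul_left, smul_eq_mul]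

theorem deriv_scaledSphBessel_zero (t : ℝ) :
    deriv (scaledSphBessel 0) t = legendreGamma 0 * scaledSphBessel 1 t := by
  rw [deriv_scaledSphBessel, (hasDerivAt_sphBessel_zero _).deriv, legendreGamma_eq, scaledSphBessel]
  norm_num
  field_simp

theorem deriv_scaledSphBessel_succ (n : ℕ) (t : ℝ) :
    deriv (scaledSphBessel (n + 1)) t =
      legendreGamma (n + 1) * scaledSphBessel (n + 2) t - legendreGamma n * scaledSphBessel n t := by
  rw [deriv_scaledSphBessel, (hasDerivAt_sphBessel_succ n _).deriv, legendreGamma_eq,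
    legendreGamma_eq, scaledSphBessel, scaledSphBessel,
    show 2 * ((n + 1 : ℕ) : ℝ) + 1 = 2 * n + 3 by push_cast; ring,
    show 2 * ((n + 1 : ℕ) : ℝ) + 3 = 2 * n + 5 by push_cast; ring,
    show 2 * ((n + 2 : ℕ) : ℝ) + 1 = 2 * n + 5 by push_cast; ring]
  have hsq : √(2 * n + 3 : ℝ) ^ 2 = 2 * n + 3 := Real.sq_sqrt (by positivity)
  field_simp
  push_cast
  linear_combination (-1) ^ (n + 1) *
    ((n + 1) * sphBessel n (π * t) - (n + 2) * sphBessel (n + 2) (π * t)) * hsq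

/-- `K^n[sinc](t) = (−1)^n √(2n+1) j_n(πt)` for the chromatic derivatives
associated with the Legendre polynomials. -/
theorem chromDeriv_sinc :
    ∀ (n : ℕ) (t : ℝ),
      chromDeriv legendreGamma n _root_.sinc t =
        (-1 : ℝ) ^ n * Real.sqrt (2 * n + 1) * sphBessel n (Real.pi * t) := by
  intro n t
  rw [← scaledSphBessel_zero, chromDeriv_eq_of_deriv legendreGamma_ne_zero
    deriv_scaledSphBessel_zero deriv_scaledSphBessel_succ]
  rfl
end

section
/- Suppose the recursion coefficients satisfy 1/M ≤ γ_n ≤ M(n+r)^p for all n, with M ≥ 1, r ≥ 0 integer and p ≥ 0. Then |(K^n ∘ D^k)[m](0)| ≤ (2M)^k · ((k+r)!)^p for all n and k. -/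
open scoped ContDiff


lemma chromDeriv_contDiff (γ : ℕ → ℝ) :
    ∀ (n : ℕ) {f : ℝ → ℝ}, ContDiff ℝ ∞ f → ContDiff ℝ ∞ (chromDeriv γ n f)
  | 0, _, hf => hf
  | 1, _, hf => by
      simpa [chromDeriv] using ((contDiff_infty_iff_deriv.mp hf).2.const_smul ((1 : ℝ)/γ 0))
  | (n + 2), f, hf => by
      have h1 : ContDiff ℝ ∞ (chromDeriv γ (n+1) f) := chromDeriv_contDiff γ (n+1) hf
      have h2 : ContDiff ℝ ∞ (chromDeriv γ n f) := chromDeriv_contDiff γ n hf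
      have h1' : ContDiff ℝ ∞ (deriv (chromDeriv γ (n+1) f)) :=
        (contDiff_infty_iff_deriv.mp h1).2
      show ContDiff ℝ ∞ (fun t => (1 / γ (n + 1)) * deriv (chromDeriv γ (n + 1) f) t +
        (γ n / γ (n + 1)) * chromDeriv γ n f t)
      exact ((h1'.const_smul ((1:ℝ)/γ (n+1))).add (h2.const_smul (γ n/γ (n+1))))

lemma chromDeriv_comm (γ : ℕ → ℝ) :
    ∀ (n : ℕ) {f : ℝ → ℝ}, ContDiff ℝ ∞ f →
      chromDeriv γ n (deriv f) = deriv (chromDeriv γ n f)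
  | 0, _, _ => rfl
  | 1, f, hf => by
      funext t
      have hd : DifferentiableAt ℝ (deriv f) t :=
        ((contDiff_infty_iff_deriv.mp hf).2.differentiable (by simp)) t
      show (1 / γ 0) * deriv (deriv f) t = deriv (fun t => (1 / γ 0) * deriv f t) t
      rw [deriv_const_mul _ hd]
  | (n + 2), f, hf => by
      funext t
      have h1 : ContDiff ℝ ∞ (chromDeriv γ (n+1) f) := chromDeriv_contDiff γ (n+1) hf
      have h2 : ContDiff ℝ ∞ (chromDeriv γ n f) := chromDeriv_contDiff γ n hf
      have h1' : DifferentiableAt ℝ (deriv (chromDeriv γ (n+1) f)) t :=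
        ((contDiff_infty_iff_deriv.mp h1).2.differentiable (by simp)) t
      have h2' : DifferentiableAt ℝ (chromDeriv γ n f) t :=
        (h2.differentiable (by simp)) t
      have hR : deriv (chromDeriv γ (n+2) f) t =
          (1 / γ (n + 1)) * deriv (deriv (chromDeriv γ (n + 1) f)) t +
            (γ n / γ (n + 1)) * deriv (chromDeriv γ n f) t := by
        have := ((h1'.hasDerivAt.const_mul ((1:ℝ) / γ (n+1))).add
          (h2'.hasDerivAt.const_mul (γ n / γ (n+1)))).deriv
        exact this
      have e1 := chromDeriv_comm γ (n+1) hf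
      have e2 := chromDeriv_comm γ n hf
      show (1 / γ (n + 1)) * deriv (chromDeriv γ (n + 1) (deriv f)) t +
        (γ n / γ (n + 1)) * chromDeriv γ n (deriv f) t = _
      rw [e1, e2, hR]

/-- If `1/M ≤ γ_n ≤ M(n+r)^p` for all `n` (with `M ≥ 1`, `r ≥ 0`, `p ≥ 0`),
then `|(K^n ∘ D^k)[m](0)| ≤ (2M)^k ((k+r)!)^p` for all `n, k`. -/
theorem chromDeriv_iteratedDeriv_bound
    (γ : ℕ → ℝ) (hγ : ∀ n, 0 < γ n)
    (M : ℝ) (hM : 1 ≤ M) (r : ℕ) (p : ℝ) (hp : 0 ≤ p)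
    (hγlow : ∀ n, 1 / M ≤ γ n)
    (hγup : ∀ n, γ n ≤ M * (((n + r : ℕ) : ℝ)) ^ p)
    (m : ℝ → ℝ) (hm : ContDiff ℝ (⊤ : ℕ∞) m)
    (hm0 : m 0 = 1)
    (hvanish : ∀ n k : ℕ, (k < n ∨ Odd (k + n)) →
      chromDeriv γ n (deriv^[k] m) 0 = 0) :
    ∀ n k : ℕ,
      |chromDeriv γ n (deriv^[k] m) 0| ≤
        (2 * M) ^ k * (((k + r).factorial : ℝ)) ^ p := by
  have hm' : ContDiff ℝ ∞ m := hm.of_le (by simp)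
  have hmk : ∀ k : ℕ, ContDiff ℝ ∞ (deriv^[k] m) := fun k => hm'.iterate_deriv k
  set a : ℕ → ℕ → ℝ := fun n k => chromDeriv γ n (deriv^[k] m) 0 with ha
  -- commutation: deriv of K^n (D^k m) at 0 equals a (n) (k+1)
  have hcomm : ∀ n k : ℕ, deriv (chromDeriv γ n (deriv^[k] m)) 0 = a n (k+1) := by
    intro n k
    have := chromDeriv_comm γ n (hmk k)
    rw [← this, ha]
    simp only []
    congr 1
    rw [Function.iterate_succ_apply']
  -- recursions
  have hrec0 : ∀ k : ℕ, a 0 (k+1) = γ 0 * a 1 k := by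
    intro k
    have h1 : a 1 k = (1 / γ 0) * deriv (deriv^[k] m) 0 := rfl
    have h0 : a 0 (k+1) = deriv (deriv^[k] m) 0 := by
      show deriv^[k+1] m 0 = _
      rw [Function.iterate_succ_apply']
    rw [h0, h1, ← mul_assoc, mul_one_div, div_self (hγ 0).ne', one_mul]
  have hrec : ∀ n k : ℕ, a (n+1) (k+1) = γ (n+1) * a (n+2) k - γ n * a n k := by
    intro n k
    have h2 : a (n+2) k =
        (1 / γ (n + 1)) * deriv (chromDeriv γ (n + 1) (deriv^[k] m)) 0 +
          (γ n / γ (n + 1)) * a n k := rfl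
    rw [hcomm (n+1) k] at h2
    have hne : γ (n+1) ≠ 0 := (hγ (n+1)).ne'
    rw [h2]; field_simp; try ring
  -- positivity facts
  have h2M : (0:ℝ) < 2 * M := by linarith
  have hfac : ∀ k : ℕ, (1:ℝ) ≤ (((k + r).factorial : ℝ)) ^ p := by
    intro k
    have h1 : (1:ℝ) ≤ ((k + r).factorial : ℝ) :=
      Nat.one_le_cast.mpr (Nat.one_le_iff_ne_zero.mpr (Nat.factorial_ne_zero _))
    exact Real.one_le_rpow h1 hp
  have hboundpos : ∀ k : ℕ, (0:ℝ) ≤ (2 * M) ^ k * (((k + r).factorial : ℝ)) ^ p := by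
    intro k
    exact mul_nonneg (pow_nonneg h2M.le k) (le_trans zero_le_one (hfac k))
  intro n k
  induction k generalizing n with
  | zero =>
    rcases Nat.eq_zero_or_pos n with hn | hn
    · subst hn
      have h : chromDeriv γ 0 (deriv^[0] m) 0 = 1 := by
        show deriv^[0] m 0 = 1
        simpa using hm0
      rw [h]
      simpa using hfac 0
    · rw [hvanish n 0 (Or.inl hn)]
      simpa using hboundpos 0
  | succ k ih =>
    by_cases hv : (k + 1 < n ∨ Odd (k + 1 + n))
    · rw [hvanish n (k+1) hv]
      simpa using hboundpos (k+1)
    · push_neg at hv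
      have hn : n ≤ k + 1 := by omega
      -- key: γ j ≤ M * ((k+1+r)!/(k+r)!)^p-ish bound for j ≤ k+1
      have hγle : ∀ j : ℕ, j ≤ k + 1 → γ j ≤ M * (((k + 1 + r : ℕ) : ℝ)) ^ p := by
        intro j hj
        refine le_trans (hγup j) (mul_le_mul_of_nonneg_left ?_ (by linarith))
        exact Real.rpow_le_rpow (by positivity)
          (by exact_mod_cast Nat.add_le_add_right hj r) hp
      have hfact : ((((k + 1 + r).factorial : ℕ) : ℝ)) ^ p =
          (((k + 1 + r : ℕ) : ℝ)) ^ p * (((k + r).factorial : ℝ)) ^ p := by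
        rw [← Real.mul_rpow (by positivity) (by positivity)]
        congr 1
        have : k + 1 + r = (k + r) + 1 := by omega
        rw [this, Nat.factorial_succ]
        push_cast
        ring
      have hRHS : (2 * M) ^ (k+1) * (((k + 1 + r).factorial : ℝ)) ^ p =
          (2 * (M * (((k + 1 + r : ℕ) : ℝ)) ^ p)) *
            ((2 * M) ^ k * (((k + r).factorial : ℝ)) ^ p) := by
        rw [hfact, pow_succ]
        ring
      rw [hRHS]
      -- now case on n
      rcases Nat.eq_zero_or_pos n with h0 | h0
      · subst h0
        show |a 0 (k+1)| ≤ _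
        rw [hrec0 k]
        rw [abs_mul, abs_of_pos (hγ 0)]
        calc γ 0 * |a 1 k| ≤ (M * (((k + 1 + r : ℕ) : ℝ)) ^ p) *
              ((2 * M) ^ k * (((k + r).factorial : ℝ)) ^ p) := by
              apply mul_le_mul (hγle 0 (by omega)) (ih 1) (abs_nonneg _)
              have : (0:ℝ) < M * (((k + 1 + r : ℕ) : ℝ)) ^ p :=
                lt_of_lt_of_le (hγ 0) (hγle 0 (by omega))
              linarith
          _ ≤ _ := by
              have h1 : (0:ℝ) ≤ (M * (((k + 1 + r : ℕ) : ℝ)) ^ p) :=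
                le_trans (hγ 0).le (hγle 0 (by omega))
              nlinarith [hboundpos k, hγ 0]
      · obtain ⟨j, rfl⟩ : ∃ j, n = j + 1 := ⟨n - 1, by omega⟩
        show |a (j+1) (k+1)| ≤ _
        rw [hrec j k]
        have key : |γ (j+1) * a (j+2) k - γ j * a j k| ≤
            γ (j+1) * |a (j+2) k| + γ j * |a j k| := by
          calc |γ (j+1) * a (j+2) k - γ j * a j k|
              ≤ |γ (j+1) * a (j+2) k| + |γ j * a j k| := abs_sub _ _
            _ = γ (j+1) * |a (j+2) k| + γ j * |a j k| := by
                rw [abs_mul, abs_mul, abs_of_pos (hγ (j+1)), abs_of_pos (hγ j)]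
        refine le_trans key ?_
        have hB := hboundpos k
        set B := (2 * M) ^ k * (((k + r).factorial : ℝ)) ^ p with hBdef
        have h1 : γ (j+1) * |a (j+2) k| ≤ (M * (((k + 1 + r : ℕ) : ℝ)) ^ p) * B := by
          apply mul_le_mul (hγle (j+1) hn) (ih (j+2)) (abs_nonneg _)
          exact le_trans (hγ (j+1)).le (hγle (j+1) hn)
        have h2 : γ j * |a j k| ≤ (M * (((k + 1 + r : ℕ) : ℝ)) ^ p) * B := by
          apply mul_le_mul (hγle j (by omega)) (ih j) (abs_nonneg _)
          exact le_trans (hγ j).le (hγle j (by omega))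
        linarith
end

section
/- Suppose 1/M ≤ γ_n ≤ M(n+r)^p and γ_n/γ_{n+1} ≤ M² for all n, with M ≥ 1. Then |K^n[t^k/k!](0)| ≤ (2M)^n for all n and k. -/
open Set
open scoped ContDiff Nat

theorem deriv_pow_succ_div_factorial (k : ℕ) :
    deriv (fun t : ℝ => t ^ (k + 1) / ((k + 1)! : ℝ)) = fun t => t ^ k / (k ! : ℝ) := by
  funext t
  simp only [deriv_div_const, deriv_pow_field, Nat.factorial_succ]
  push_cast
  field_simp

section

variable (γ : ℕ → ℝ)

theorem contDiff_chromDeriv {f : ℝ → ℝ} (hf : ContDiff ℝ ∞ f) :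
    ∀ n, ContDiff ℝ ∞ (chromDeriv γ n f)
  | 0 => hf
  | 1 => (contDiff_infty_iff_deriv.1 hf).2.const_smul (1 / γ 0)
  | n + 2 =>
    ((contDiff_infty_iff_deriv.1 (contDiff_chromDeriv hf (n + 1))).2.const_smul
      (1 / γ (n + 1))).add ((contDiff_chromDeriv hf n).const_smul (γ n / γ (n + 1)))

theorem deriv_chromDeriv {f : ℝ → ℝ} (hf : ContDiff ℝ ∞ f) :
    ∀ n, deriv (chromDeriv γ n f) = chromDeriv γ n (deriv f)
  | 0 => rfl
  | 1 => deriv_const_mul_field' _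
  | n + 2 => by
    obtain ⟨-, hK₁'⟩ := contDiff_infty_iff_deriv.1 (contDiff_chromDeriv γ hf (n + 1))
    have hK₀ := contDiff_chromDeriv γ hf n
    funext t
    have hderiv := ((hK₁'.differentiable (by simp) t).hasDerivAt.const_mul (1 / γ (n + 1))).add
      ((hK₀.differentiable (by simp) t).hasDerivAt.const_mul (γ n / γ (n + 1)))
    rw [chromDeriv, chromDeriv, ← deriv_chromDeriv hf (n + 1), ← deriv_chromDeriv hf n]
    exact hderiv.deriv

theorem abs_chromDeriv_le {M : ℝ} (hM : 0 < M) (hγlow : ∀ n, 1 / M ≤ γ n)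
    (hratio : ∀ n, γ n / γ (n + 1) ≤ M ^ 2) {F : Set (ℝ → ℝ)}
    (hF_smooth : ∀ f ∈ F, ContDiff ℝ ∞ f) (hF_deriv : ∀ f ∈ F, deriv f ∈ F) {x : ℝ}
    (hF_le : ∀ f ∈ F, |f x| ≤ 1) :
    ∀ n, ∀ f ∈ F, |chromDeriv γ n f x| ≤ (2 * M) ^ n := by
  have hγ n : 0 < γ n := (one_div_pos.2 hM).trans_le (hγlow n)
  have hγinv n : 1 / γ n ≤ M := (one_div_le (hγ n) hM).2 (hγlow n)
  intro n
  induction n using Nat.twoStepInduction with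
  | zero =>
    intro f hf
    rw [pow_zero]
    exact hF_le f hf
  | one =>
    intro f hf
    calc |1 / γ 0 * deriv f x| = 1 / γ 0 * |deriv f x| := by
          rw [abs_mul, abs_of_pos (one_div_pos.2 (hγ 0))]
      _ ≤ M * 1 := by gcongr; exacts [hγinv 0, hF_le _ (hF_deriv f hf)]
      _ ≤ (2 * M) ^ 1 := by linarith
  | more n ih₀ ih₁ =>
    intro f hf
    have hK₁ : |deriv (chromDeriv γ (n + 1) f) x| ≤ (2 * M) ^ (n + 1) := by
      rw [deriv_chromDeriv γ (hF_smooth f hf)]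
      exact ih₁ _ (hF_deriv f hf)
    calc |chromDeriv γ (n + 2) f x|
        ≤ 1 / γ (n + 1) * |deriv (chromDeriv γ (n + 1) f) x|
          + γ n / γ (n + 1) * |chromDeriv γ n f x| := by
          refine (abs_add_le _ _).trans_eq ?_
          rw [abs_mul, abs_mul, abs_of_pos (one_div_pos.2 (hγ _)),
            abs_of_pos (div_pos (hγ _) (hγ _))]
      _ ≤ M * (2 * M) ^ (n + 1) + M ^ 2 * (2 * M) ^ n := by
          gcongr
          exacts [hγinv _, hratio n, ih₀ f hf]
      _ ≤ (2 * M) ^ (n + 2) := by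
          have : 0 ≤ M ^ 2 * (2 * M) ^ n := by positivity
          linear_combination this

end

theorem chromDeriv_monomial_bound_general
    (γ : ℕ → ℝ)
    (M : ℝ) (hM : 1 ≤ M)
    (hγlow : ∀ n, 1 / M ≤ γ n)
    (hratio : ∀ n, γ n / γ (n + 1) ≤ M ^ 2) :
    ∀ n k : ℕ,
      |chromDeriv γ n (fun t : ℝ => t ^ k / (k.factorial : ℝ)) 0| ≤
        (2 * M) ^ n := by
  intro n k
  let F : Set (ℝ → ℝ) := insert 0 (range fun k t => t ^ k / (k ! : ℝ))
  refine abs_chromDeriv_le γ (one_pos.trans_le hM) hγlow hratio (F := F) ?_ ?_ ?_ n _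
    (mem_insert_of_mem _ ⟨k, rfl⟩)
  · rintro _ (rfl | ⟨k, rfl⟩)
    exacts [contDiff_zero_fun, by fun_prop]
  · rintro _ (rfl | ⟨_ | k, rfl⟩)
    · rw [deriv_zero]
      exact mem_insert _ _
    · simp only [pow_zero, Nat.factorial_zero, Nat.cast_one, div_one, deriv_const']
      exact mem_insert _ _
    · exact mem_insert_of_mem _ ⟨k, (deriv_pow_succ_div_factorial k).symm⟩
  · rintro _ (rfl | ⟨_ | k, rfl⟩) <;> simp

/-- If `1/M ≤ γ_n ≤ M(n+r)^p` and `γ_n/γ_{n+1} ≤ M²` for all `n`, with `M ≥ 1`,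
then `|K^n[t^k/k!](0)| ≤ (2M)^n` for all `n` and `k`. -/
theorem chromDeriv_monomial_bound
    (γ : ℕ → ℝ) (hγ : ∀ n, 0 < γ n)
    (M : ℝ) (hM : 1 ≤ M) (r : ℕ) (p : ℝ) (hp : 0 ≤ p)
    (hγlow : ∀ n, 1 / M ≤ γ n)
    (hγup : ∀ n, γ n ≤ M * (((n + r : ℕ) : ℝ)) ^ p)
    (hratio : ∀ n, γ n / γ (n + 1) ≤ M ^ 2) :
    ∀ n k : ℕ,
      |chromDeriv γ n (fun t : ℝ => t ^ k / (k.factorial : ℝ)) 0| ≤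
        (2 * M) ^ n :=
  chromDeriv_monomial_bound_general γ M hM hγlow hratio
end

section
/- Let M be weakly bounded with p < 1 such that 1/M ≤ γ_n ≤ M(n+r)^p and γ_n/γ_{n+1} ≤ M². Then for any function f analytic at u, limsup_{n→∞} |K^n[f](u)/(n!)^{1−p}|^{1/n} ≤ 2M · limsup_{n→∞} |f^{(n)}(u)/(n!)^{1−p}|^{1/n}. -/
open Filter

/-!
Write `K^n[f](u) = ∑_{k ≤ n} c_{n,k} f^{(k)}(u)`. The coefficients satisfy the three-term
recursion of `K^n`, so `1/γ_n ≤ M` and `γ_n/γ_{n+1} ≤ M²` give `|c_{n,k}| ≤ (2M)^n`, whence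
`|K^n[f](u)| ≤ (2M)^n ∑_{k ≤ n} |f^{(k)}(u)|`. Since `(n+1)!^{1-p} / n!^{1-p} → ∞`, any bound
`|f^{(k)}(u)| ≤ B^k k!^{1-p}` eventually controls the whole partial sum by
`(n + 2) B^n n!^{1-p}`, and `(n + 2)^{1/n} → 1`.
-/

open Finset Topology
open scoped NNReal

theorem tendsto_atTop_of_tendsto_ratio_atTop {v : ℕ → ℝ} (hv : ∀ n, 0 < v n)
    (hratio : Tendsto (fun n => v (n + 1) / v n) atTop atTop) : Tendsto v atTop atTop := by
  obtain ⟨K, hK⟩ := eventually_atTop.mp (hratio.eventually_ge_atTop 2)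
  refine (tendsto_add_atTop_iff_nat K).mp (tendsto_atTop_of_geom_le (hv (0 + K)) one_lt_two ?_)
  intro n
  have h := hK (n + K) (by omega)
  rw [le_div_iff₀ (hv _)] at h
  simpa [Nat.add_right_comm n 1 K] using h

theorem eventually_sum_range_le_mul {a v : ℕ → ℝ} (hv : ∀ n, 0 < v n)
    (hratio : Tendsto (fun n => v (n + 1) / v n) atTop atTop) (hav : ∀ᶠ n in atTop, a n ≤ v n) :
    ∀ᶠ n in atTop, ∑ k ∈ range (n + 1), a k ≤ (n + 2) * v n := by
  obtain ⟨K, hK⟩ := eventually_atTop.mp (hav.and (hratio.eventually_ge_atTop 1))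
  have hmono : MonotoneOn v (Set.Ici K) := monotoneOn_nat_Ici_of_le_succ fun n hn => by
    simpa [le_div_iff₀ (hv n)] using (hK n hn).2
  filter_upwards [eventually_ge_atTop K,
    (tendsto_atTop_of_tendsto_ratio_atTop hv hratio).eventually_ge_atTop (∑ k ∈ range K, a k)]
    with n hKn hCn
  calc ∑ k ∈ range (n + 1), a k = ∑ k ∈ range K, a k + ∑ k ∈ Ico K (n + 1), a k :=
        (sum_range_add_sum_Ico a (by omega)).symm
    _ ≤ v n + ∑ k ∈ range (n + 1), v n := by
        gcongr
        calc ∑ k ∈ Ico K (n + 1), a k ≤ ∑ k ∈ Ico K (n + 1), v n :=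
              sum_le_sum fun k hk => by
                rw [mem_Ico] at hk
                exact (hK k hk.1).1.trans (hmono hk.1 hKn (by omega))
          _ ≤ ∑ k ∈ range (n + 1), v n :=
              sum_le_sum_of_subset_of_nonneg (fun k hk => mem_range.mpr (mem_Ico.mp hk).2)
                fun _ _ _ => (hv n).le
    _ = (n + 2) * v n := by
        simp only [sum_const, card_range, nsmul_eq_mul, Nat.cast_add, Nat.cast_one]; ring

theorem tendsto_natCast_add_two_rpow_one_div :
    Tendsto (fun n : ℕ => ((n : ℝ) + 2) ^ ((1 : ℝ) / n)) atTop (𝓝 1) := by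
  have := (tendsto_rpow_div_mul_add 1 1 (-2) one_ne_zero.symm).comp
    (tendsto_atTop_add_const_right atTop 2 tendsto_natCast_atTop_atTop)
  refine this.congr fun n => ?_
  simp

theorem rpow_one_div_le_mul_of_le_pow_mul {x y c : ℝ} {n : ℕ} (hn : n ≠ 0) (hx : 0 ≤ x)
    (hy : 0 ≤ y) (hc : 0 ≤ c) (h : x ≤ c ^ n * y) : x ^ ((1 : ℝ) / n) ≤ c * y ^ ((1 : ℝ) / n) :=
  calc x ^ ((1 : ℝ) / n) ≤ (c ^ n * y) ^ ((1 : ℝ) / n) := by gcongr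
    _ = c * y ^ ((1 : ℝ) / n) := by
      rw [Real.mul_rpow (by positivity) hy, one_div, Real.pow_rpow_inv_natCast hc hn]

theorem limsup_rpow_div_le_mul_limsup {x y w : ℕ → ℝ} {c : ℝ} (hc : 0 ≤ c)
    (hw : ∀ n, 0 < w n) (hy : ∀ n, 0 ≤ y n) (hxy : ∀ n, |x n| ≤ c ^ n * y n) :
    limsup (fun n : ℕ => ENNReal.ofReal (|x n / w n| ^ ((1 : ℝ) / n))) atTop ≤
      ENNReal.ofReal c *
        limsup (fun n : ℕ => ENNReal.ofReal ((y n / w n) ^ ((1 : ℝ) / n))) atTop := by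
  rw [← ENNReal.limsup_const_mul_of_ne_top ENNReal.ofReal_ne_top]
  refine limsup_le_limsup ?_
  filter_upwards [eventually_ne_atTop 0] with n hn
  rw [← ENNReal.ofReal_mul hc]
  refine ENNReal.ofReal_le_ofReal (rpow_one_div_le_mul_of_le_pow_mul hn (abs_nonneg _)
    (div_nonneg (hy n) (hw n).le) hc ?_)
  rw [abs_div, abs_of_pos (hw n), mul_div_assoc']
  exact div_le_div_of_nonneg_right (hxy n) (hw n).le

theorem tendsto_factorial_succ_rpow_div_factorial_rpow {q : ℝ} (hq : 0 < q) :
    Tendsto (fun n => ((n + 1).factorial : ℝ) ^ q / (n.factorial : ℝ) ^ q) atTop atTop := by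
  have h : Tendsto (fun n : ℕ => ((n : ℝ) + 1) ^ q) atTop atTop :=
    (tendsto_rpow_atTop hq).comp (tendsto_atTop_add_const_right atTop 1 tendsto_natCast_atTop_atTop)
  refine h.congr fun n => ?_
  have : (0 : ℝ) < (n.factorial : ℝ) ^ q := by positivity
  rw [Nat.factorial_succ, Nat.cast_mul, Real.mul_rpow (by positivity) (by positivity)]
  push_cast
  field_simp

theorem limsup_rpow_sum_div_le {w : ℕ → ℝ} (hw : ∀ n, 0 < w n)
    (hratio : Tendsto (fun n => w (n + 1) / w n) atTop atTop) (a : ℕ → ℝ) :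
    limsup (fun n : ℕ => ENNReal.ofReal (((∑ k ∈ range (n + 1), |a k|) / w n) ^ ((1 : ℝ) / n)))
        atTop ≤
      limsup (fun n : ℕ => ENNReal.ofReal (|a n / w n| ^ ((1 : ℝ) / n))) atTop := by
  refine le_of_forall_gt_imp_ge_of_dense fun B hB => ?_
  rcases eq_or_ne B ⊤ with rfl | hBtop
  · exact le_top
  lift B to ℝ≥0 using hBtop
  have hb : 0 < (B : ℝ) := by
    exact_mod_cast (ENNReal.coe_pos.mp (pos_of_gt hB))
  set v : ℕ → ℝ := fun n => (B : ℝ) ^ n * w n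
  have hv : ∀ n, 0 < v n := fun n => mul_pos (pow_pos hb n) (hw n)
  have hvratio : Tendsto (fun n => v (n + 1) / v n) atTop atTop := by
    refine (hratio.const_mul_atTop hb).congr fun n => ?_
    simp only [v, pow_succ]
    field_simp [(hw n).ne', hb.ne']
  have hav : ∀ᶠ n in atTop, |a n| ≤ v n := by
    filter_upwards [eventually_lt_of_limsup_lt hB, eventually_ne_atTop 0] with n hn hn0
    rw [← ENNReal.ofReal_coe_nnreal, ENNReal.ofReal_lt_ofReal_iff hb, one_div,
      Real.rpow_inv_lt_iff_of_pos (abs_nonneg _) hb.le (by positivity), abs_div,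
      abs_of_pos (hw n), div_lt_iff₀ (hw n), Real.rpow_natCast] at hn
    exact hn.le
  have hbound : ∀ᶠ n in atTop,
      ENNReal.ofReal (((∑ k ∈ range (n + 1), |a k|) / w n) ^ ((1 : ℝ) / n)) ≤
        ENNReal.ofReal (B * ((n : ℝ) + 2) ^ ((1 : ℝ) / n)) := by
    filter_upwards [eventually_sum_range_le_mul hv hvratio hav, eventually_ne_atTop 0]
      with n hn hn0
    refine ENNReal.ofReal_le_ofReal (rpow_one_div_le_mul_of_le_pow_mul hn0
      (div_nonneg (sum_nonneg fun _ _ => abs_nonneg _) (hw n).le) (by positivity) hb.le ?_)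
    rw [div_le_iff₀ (hw n)]
    simpa [v, mul_comm, mul_left_comm, mul_assoc] using hn
  have hlim : Tendsto (fun n : ℕ => ENNReal.ofReal (B * ((n : ℝ) + 2) ^ ((1 : ℝ) / n)))
      atTop (𝓝 B) := by
    simpa using (ENNReal.tendsto_ofReal (tendsto_natCast_add_two_rpow_one_div.const_mul (B : ℝ)))
  exact (limsup_le_limsup hbound).trans hlim.limsup_eq.le

/-- `chromCoeff γ n k = K^n[t^k/k!](0)`, the coefficient of `f^{(k)}` in `K^n[f]`. -/
noncomputable def chromCoeff (γ : ℕ → ℝ) : ℕ → ℕ → ℝ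
  | 0, 0 => 1
  | 0, _ + 1 => 0
  | 1, 0 => 0
  | 1, k + 1 => 1 / γ 0 * chromCoeff γ 0 k
  | n + 2, 0 => γ n / γ (n + 1) * chromCoeff γ n 0
  | n + 2, k + 1 =>
      1 / γ (n + 1) * chromCoeff γ (n + 1) k + γ n / γ (n + 1) * chromCoeff γ n (k + 1)

namespace chromCoeff

variable (γ : ℕ → ℝ)

theorem eq_zero_of_lt : ∀ {n k : ℕ}, n < k → chromCoeff γ n k = 0
  | 0, _ + 1, _ => rfl
  | 1, k + 1, h => by simp [chromCoeff, eq_zero_of_lt (Nat.succ_lt_succ_iff.mp h)]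
  | n + 2, k + 1, h => by
      simp [chromCoeff, eq_zero_of_lt (show n + 1 < k by omega),
        eq_zero_of_lt (show n < k + 1 by omega)]

theorem sum_range_mul_eq {n N : ℕ} (hN : n < N) (g : ℕ → ℝ) :
    ∑ k ∈ range N, chromCoeff γ n k * g k = ∑ k ∈ range (n + 1), chromCoeff γ n k * g k :=
  (sum_subset (range_subset_range.mpr hN) fun k _ hk => by
    rw [eq_zero_of_lt γ (by simpa using hk), zero_mul]).symm

theorem abs_le_pow {M : ℝ} (hinv : ∀ n, |1 / γ n| ≤ M)
    (hratio : ∀ n, |γ n / γ (n + 1)| ≤ M ^ 2) : ∀ n k, |chromCoeff γ n k| ≤ (2 * M) ^ n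
  | 0, 0 => by simp [chromCoeff]
  | 0, k + 1 => by simp [chromCoeff]
  | 1, 0 => by simpa [chromCoeff] using (abs_nonneg _).trans (hinv 0)
  | 1, k + 1 => by
      have hM : 0 ≤ M := (abs_nonneg _).trans (hinv 0)
      calc |chromCoeff γ 1 (k + 1)| = |1 / γ 0| * |chromCoeff γ 0 k| := abs_mul _ _
        _ ≤ M * 1 := by gcongr; exacts [hinv 0, by simpa using abs_le_pow hinv hratio 0 k]
        _ ≤ (2 * M) ^ 1 := by linarith
  | n + 2, 0 => by
      have hM : 0 ≤ M := (abs_nonneg _).trans (hinv 0)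
      calc |chromCoeff γ (n + 2) 0| = |γ n / γ (n + 1)| * |chromCoeff γ n 0| := abs_mul _ _
        _ ≤ M ^ 2 * (2 * M) ^ n := by gcongr; exacts [hratio n, abs_le_pow hinv hratio n 0]
        _ ≤ (2 * M) ^ (n + 2) := by
            have : 0 ≤ M ^ 2 * (2 * M) ^ n := by positivity
            linear_combination 3 * this
  | n + 2, k + 1 => by
      have hM : 0 ≤ M := (abs_nonneg _).trans (hinv 0)
      calc |chromCoeff γ (n + 2) (k + 1)|
          ≤ |1 / γ (n + 1)| * |chromCoeff γ (n + 1) k| +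
              |γ n / γ (n + 1)| * |chromCoeff γ n (k + 1)| := by
            rw [← abs_mul, ← abs_mul]; exact abs_add_le _ _
        _ ≤ M * (2 * M) ^ (n + 1) + M ^ 2 * (2 * M) ^ n := by
            gcongr
            exacts [hinv _, abs_le_pow hinv hratio _ _, hratio n, abs_le_pow hinv hratio _ _]
        _ ≤ (2 * M) ^ (n + 2) := by
            have : 0 ≤ M ^ 2 * (2 * M) ^ n := by positivity
            linear_combination this

end chromCoeff

theorem chromDeriv_eq_sum (γ : ℕ → ℝ) {f : ℝ → ℝ} :
    ∀ n {u : ℝ}, AnalyticAt ℝ f u →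
      chromDeriv γ n f u = ∑ k ∈ range (n + 1), chromCoeff γ n k * iteratedDeriv k f u
  | 0, _, _ => by simp [chromDeriv, chromCoeff]
  | 1, _, _ => by simp [chromDeriv, chromCoeff, sum_range_succ]
  | n + 2, u, hf => by
      have hdiff : ∀ k, DifferentiableAt ℝ (iteratedDeriv k f) u := fun k => by
        rw [iteratedDeriv_eq_iterate]; exact (hf.iterated_deriv k).differentiableAt
      have hderiv : deriv (chromDeriv γ (n + 1) f) u =
          ∑ k ∈ range (n + 2), chromCoeff γ (n + 1) k * iteratedDeriv (k + 1) f u := by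
        have heq : chromDeriv γ (n + 1) f =ᶠ[𝓝 u]
            fun t => ∑ k ∈ range (n + 2), chromCoeff γ (n + 1) k * iteratedDeriv k f t :=
          hf.eventually_analyticAt.mono fun t ht => chromDeriv_eq_sum γ (n + 1) ht
        rw [heq.deriv_eq, deriv_fun_sum fun k _ => (hdiff k).const_mul _]
        refine sum_congr rfl fun k _ => ?_
        rw [deriv_const_mul _ (hdiff k), iteratedDeriv_succ]
      have hlow : ∑ k ∈ range (n + 1), chromCoeff γ n k * iteratedDeriv k f u =
          ∑ k ∈ range (n + 2), chromCoeff γ n (k + 1) * iteratedDeriv (k + 1) f u +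
            chromCoeff γ n 0 * iteratedDeriv 0 f u := by
        rw [← sum_range_succ' (fun k => chromCoeff γ n k * iteratedDeriv k f u),
          chromCoeff.sum_range_mul_eq γ (N := n + 3) (by omega)]
      simp only [chromDeriv]
      rw [hderiv, chromDeriv_eq_sum γ n hf, hlow, sum_range_succ' _ (n + 2)]
      simp only [chromCoeff, add_mul, sum_add_distrib, mul_assoc, ← mul_sum]
      ring

theorem abs_chromDeriv_le_s19 {γ : ℕ → ℝ} {M : ℝ} (hinv : ∀ n, |1 / γ n| ≤ M)
    (hratio : ∀ n, |γ n / γ (n + 1)| ≤ M ^ 2) {f : ℝ → ℝ} {u : ℝ} (hf : AnalyticAt ℝ f u)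
    (n : ℕ) : |chromDeriv γ n f u| ≤ (2 * M) ^ n * ∑ k ∈ range (n + 1), |iteratedDeriv k f u| := by
  rw [chromDeriv_eq_sum γ n hf, mul_sum]
  refine (abs_sum_le_sum_abs _ _).trans (sum_le_sum fun k _ => ?_)
  rw [abs_mul]
  exact mul_le_mul_of_nonneg_right (chromCoeff.abs_le_pow γ hinv hratio n k) (abs_nonneg _)

theorem chromDeriv_limsup_bound_general
    (γ : ℕ → ℝ) (hγ : ∀ n, 0 < γ n)
    (M : ℝ) (hM : 1 ≤ M) (p : ℝ) (hp1 : p < 1)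
    (hγlow : ∀ n, 1 / M ≤ γ n)
    (hratio : ∀ n, γ n / γ (n + 1) ≤ M ^ 2)
    (f : ℝ → ℝ) (u : ℝ) (hf : AnalyticAt ℝ f u) :
    Filter.limsup
        (fun n : ℕ => ENNReal.ofReal
          (|chromDeriv γ n f u / ((n.factorial : ℝ)) ^ (1 - p)| ^ ((1 : ℝ) / n)))
        atTop ≤
      ENNReal.ofReal (2 * M) *
        Filter.limsup
          (fun n : ℕ => ENNReal.ofReal
            (|iteratedDeriv n f u / ((n.factorial : ℝ)) ^ (1 - p)| ^ ((1 : ℝ) / n)))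
          atTop := by
  have hM0 : 0 < M := one_pos.trans_le hM
  have hinv : ∀ n, |1 / γ n| ≤ M := fun n => by
    rw [abs_of_pos (one_div_pos.mpr (hγ n)), div_le_iff₀ (hγ n), ← div_le_iff₀' hM0]
    exact hγlow n
  have habsratio : ∀ n, |γ n / γ (n + 1)| ≤ M ^ 2 := fun n => by
    rw [abs_of_pos (div_pos (hγ n) (hγ (n + 1)))]
    exact hratio n
  have hw : ∀ n : ℕ, 0 < ((n.factorial : ℝ)) ^ (1 - p) := fun n => by positivity
  calc _ ≤ ENNReal.ofReal (2 * M) * limsup (fun n : ℕ => ENNReal.ofReal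
          (((∑ k ∈ range (n + 1), |iteratedDeriv k f u|) / (n.factorial : ℝ) ^ (1 - p)) ^
            ((1 : ℝ) / n))) atTop :=
        limsup_rpow_div_le_mul_limsup (by positivity) hw
          (fun _ => sum_nonneg fun _ _ => abs_nonneg _) (abs_chromDeriv_le_s19 hinv habsratio hf)
    _ ≤ _ := by
        gcongr
        exact limsup_rpow_sum_div_le hw
          (tendsto_factorial_succ_rpow_div_factorial_rpow (sub_pos.mpr hp1)) _

/-- For a weakly bounded moment functional with `p < 1`
(`1/M ≤ γ_n ≤ M(n+r)^p`, `γ_n/γ_{n+1} ≤ M²`) and `f` analytic at `u`,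
`limsup |K^n[f](u)/n!^{1−p}|^{1/n} ≤ 2M · limsup |f^{(n)}(u)/n!^{1−p}|^{1/n}`. -/
theorem chromDeriv_limsup_bound
    (γ : ℕ → ℝ) (hγ : ∀ n, 0 < γ n)
    (M : ℝ) (hM : 1 ≤ M) (r : ℕ) (p : ℝ) (hp : 0 ≤ p) (hp1 : p < 1)
    (hγlow : ∀ n, 1 / M ≤ γ n)
    (hγup : ∀ n, γ n ≤ M * (((n + r : ℕ) : ℝ)) ^ p)
    (hratio : ∀ n, γ n / γ (n + 1) ≤ M ^ 2)
    (f : ℝ → ℝ) (u : ℝ) (hf : AnalyticAt ℝ f u) :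
    Filter.limsup
        (fun n : ℕ => ENNReal.ofReal
          (|chromDeriv γ n f u / ((n.factorial : ℝ)) ^ (1 - p)| ^ ((1 : ℝ) / n)))
        atTop ≤
      ENNReal.ofReal (2 * M) *
        Filter.limsup
          (fun n : ℕ => ENNReal.ofReal
            (|iteratedDeriv n f u / ((n.factorial : ℝ)) ^ (1 - p)| ^ ((1 : ℝ) / n)))
          atTop :=
  chromDeriv_limsup_bound_general γ hγ M hM p hp1 hγlow hratio f u hf
end
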